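/- arXiv:1711.06624 — 5 statements merged into one kernel-verified Lean document; each statement's English description precedes it below -/
import Mathlib

section
/- Let C be a set of 4-dimensional subspaces of F_2^8 with pairwise intersection dimension at most 1 and |C| ≥ 255. Suppose that for every point P, at most 17 codewords of C contain P. Then for every hyperplane H of F_2^8 there exists a point P' not contained in H with at least 14 codewords of C containing P'. -/
open Module
open scoped Classical

section Aux

abbrev Vec8 := Fin 8 → ZMod 2

lemma aux_card_sub (U : Submodule (ZMod 2) Vec8) (k : ℕ)
    (h : finrank (ZMod 2) U = k) :
    (Finset.univ.filter (fun v : Vec8 => v ∈ U)).card = 2 ^ k := by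
  have h1 : Fintype.card U = 2 ^ k := by
    rw [card_eq_pow_finrank (K := ZMod 2), h, ZMod.card]
  rw [← h1, Fintype.card_subtype]

lemma aux_card_nz (U : Submodule (ZMod 2) Vec8) (k : ℕ)
    (h : finrank (ZMod 2) U = k) :
    (Finset.univ.filter (fun v : Vec8 => v ≠ 0 ∧ v ∈ U)).card = 2 ^ k - 1 := by
  have h0 : Finset.univ.filter (fun v : Vec8 => v ∈ U)
      = insert 0 (Finset.univ.filter (fun v : Vec8 => v ≠ 0 ∧ v ∈ U)) := by
    ext v
    by_cases hv : v = 0 <;> simp [hv, U.zero_mem]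
  have h2 := aux_card_sub U k h
  rw [h0, Finset.card_insert_of_notMem (by simp)] at h2
  omega

end Aux

/-- For an `(8, N, 6; 4)_2`-like code `C` with `N ≥ 255` in which every point lies in at
most `17` codewords: for every hyperplane `H` there is a point `P'` not in `H` lying in at
least `14` codewords. -/
theorem exists_point_outside_hyperplane_deg14
    (C : Finset (Submodule (ZMod 2) (Fin 8 → ZMod 2)))
    (hdim : ∀ U ∈ C, finrank (ZMod 2) U = 4)
    (hdist : ∀ U ∈ C, ∀ W ∈ C, U ≠ W → finrank (ZMod 2) ↥(U ⊓ W) ≤ 1)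
    (hcard : 255 ≤ C.card)
    (hpt : ∀ P : Submodule (ZMod 2) (Fin 8 → ZMod 2), finrank (ZMod 2) P = 1 →
      ({U | U ∈ C ∧ P ≤ U} : Set (Submodule (ZMod 2) (Fin 8 → ZMod 2))).ncard ≤ 17)
    (H : Submodule (ZMod 2) (Fin 8 → ZMod 2)) (hH : finrank (ZMod 2) H = 7) :
    ∃ P' : Submodule (ZMod 2) (Fin 8 → ZMod 2), finrank (ZMod 2) P' = 1 ∧ ¬ P' ≤ H ∧
      14 ≤ ({U | U ∈ C ∧ P' ≤ U} : Set (Submodule (ZMod 2) (Fin 8 → ZMod 2))).ncard := by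
  by_contra hcon
  push_neg at hcon
  -- degree of a nonzero vector
  set d : Vec8 → ℕ := fun v => (C.filter (fun U => v ∈ U)).card with hd
  have hdeg : ∀ v : Vec8, v ≠ 0 →
      ({U | U ∈ C ∧ Submodule.span (ZMod 2) {v} ≤ U} :
        Set (Submodule (ZMod 2) Vec8)).ncard = d v := by
    intro v hv
    have : ({U | U ∈ C ∧ Submodule.span (ZMod 2) {v} ≤ U} :
        Set (Submodule (ZMod 2) Vec8)) = ↑(C.filter (fun U => v ∈ U)) := by
      ext U
      simp [Submodule.span_singleton_le_iff_mem]
    rw [this, Set.ncard_coe_finset]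
  -- inside bound
  have hin : ∀ v : Vec8, v ≠ 0 → v ∈ H → d v ≤ 17 := by
    intro v hv hvH
    have := hpt (Submodule.span (ZMod 2) {v}) (finrank_span_singleton hv)
    rwa [hdeg v hv] at this
  -- outside bound
  have hout : ∀ v : Vec8, v ≠ 0 → v ∉ H → d v ≤ 13 := by
    intro v hv hvH
    have h1 : ¬ Submodule.span (ZMod 2) {v} ≤ H := by
      rw [Submodule.span_singleton_le_iff_mem]; exact hvH
    have := hcon (Submodule.span (ZMod 2) {v}) (finrank_span_singleton hv) h1
    rw [hdeg v hv] at this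
    omega
  -- the set of nonzero vectors
  set S : Finset Vec8 := Finset.univ.filter (fun v => v ≠ 0) with hS
  -- double counting
  have hswap : ∑ v ∈ S, d v = ∑ U ∈ C, (S.filter (fun v => v ∈ U)).card := by
    simp only [hd, Finset.card_filter]
    exact Finset.sum_comm
  have hUpts : ∀ U ∈ C, (S.filter (fun v => v ∈ U)).card = 15 := by
    intro U hU
    have : S.filter (fun v => v ∈ U)
        = Finset.univ.filter (fun v : Vec8 => v ≠ 0 ∧ v ∈ U) := by
      simp [hS, Finset.filter_filter]
    rw [this, aux_card_nz U 4 (hdim U hU)]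
    norm_num
  have htotal : ∑ v ∈ S, d v = 15 * C.card := by
    rw [hswap, Finset.sum_congr rfl hUpts, Finset.sum_const, smul_eq_mul, mul_comm]
  -- split S into SH and SO
  have hsplit : ∑ v ∈ S, d v =
      ∑ v ∈ S.filter (fun v => v ∈ H), d v + ∑ v ∈ S.filter (fun v => v ∉ H), d v := by
    rw [← Finset.sum_filter_add_sum_filter_not S (fun v => v ∈ H)]
  have hSH : (S.filter (fun v => v ∈ H)).card = 127 := by
    have : S.filter (fun v => v ∈ H)
        = Finset.univ.filter (fun v : Vec8 => v ≠ 0 ∧ v ∈ H) := by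
      simp [hS, Finset.filter_filter]
    rw [this, aux_card_nz H 7 hH]
    norm_num
  have hSO : (S.filter (fun v => v ∉ H)).card ≤ 128 := by
    have hcardS : S.card = 255 := by
      have := aux_card_nz (⊤ : Submodule (ZMod 2) Vec8) 8 (by simp [finrank_top])
      have he : Finset.univ.filter
          (fun v : Vec8 => v ≠ 0 ∧ v ∈ (⊤ : Submodule (ZMod 2) Vec8)) = S := by
        simp [hS]
      rw [he] at this
      simpa using this
    have h3 : (S.filter (fun v => v ∉ H)).card
        = S.card - (S.filter (fun v => v ∈ H)).card := by
      rw [Finset.filter_not, Finset.card_sdiff_of_subset (Finset.filter_subset _ _)]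
    omega
  have hsum1 : ∑ v ∈ S.filter (fun v => v ∈ H), d v ≤ 127 * 17 := by
    rw [← hSH]
    calc ∑ v ∈ S.filter (fun v => v ∈ H), d v
        ≤ ∑ _v ∈ S.filter (fun v => v ∈ H), 17 := by
          apply Finset.sum_le_sum
          intro v hv
          simp only [hS, Finset.mem_filter, Finset.mem_univ, true_and] at hv
          exact hin v hv.1 hv.2
      _ = _ := by rw [Finset.sum_const, smul_eq_mul]
  have hsum2 : ∑ v ∈ S.filter (fun v => v ∉ H), d v ≤ 128 * 13 := by
    calc ∑ v ∈ S.filter (fun v => v ∉ H), d v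
        ≤ ∑ _v ∈ S.filter (fun v => v ∉ H), 13 := by
          apply Finset.sum_le_sum
          intro v hv
          simp only [hS, Finset.mem_filter, Finset.mem_univ, true_and] at hv
          exact hout v hv.1 hv.2
      _ = (S.filter (fun v => v ∉ H)).card * 13 := by rw [Finset.sum_const, smul_eq_mul]
      _ ≤ 128 * 13 := by
          exact Nat.mul_le_mul_right 13 hSO
  omega
end

section
/- Let C be a set of 4-dimensional subspaces of F_2^8 with pairwise intersection dimension at most 1 and |C| ≥ 255. Suppose that at most 16 codewords of C contain any given point. Then for every hyperplane H of F_2^8 there exists a point P'' not contained in H such that at least 15 codewords of C contain P''. -/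
open Module Finset

open scoped Classical

namespace Deg15Aux

lemma card_sub (U : Submodule (ZMod 2) (Fin 8 → ZMod 2)) :
    (univ.filter (· ∈ U)).card = 2 ^ finrank (ZMod 2) U := by
  rw [← Fintype.card_subtype]
  have h := card_eq_pow_finrank (K := ZMod 2) (V := U)
  rwa [ZMod.card] at h

lemma card_sub_ne (U : Submodule (ZMod 2) (Fin 8 → ZMod 2)) :
    (univ.filter (fun v => v ∈ U ∧ v ≠ 0)).card = 2 ^ finrank (ZMod 2) U - 1 := by
  have h : univ.filter (fun v => v ∈ U ∧ v ≠ 0) = (univ.filter (· ∈ U)).erase 0 := by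
    ext v; simp [Finset.mem_erase, and_comm]
  rw [h, card_erase_of_mem (by simp [U.zero_mem]), card_sub]

lemma inf_rank (U H : Submodule (ZMod 2) (Fin 8 → ZMod 2))
    (hU : finrank (ZMod 2) U = 4) (hH : finrank (ZMod 2) H = 7)
    (hn : ¬ U ≤ H) : finrank (ZMod 2) ↥(U ⊓ H) = 3 := by
  have hlt : H < U ⊔ H := lt_of_le_of_ne le_sup_right (by
    intro h; exact hn (h ▸ le_sup_left))
  have h1 : 7 < finrank (ZMod 2) ↥(U ⊔ H) :=
    hH ▸ Submodule.finrank_lt_finrank_of_lt hlt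
  have h2 : finrank (ZMod 2) ↥(U ⊔ H) ≤ 8 := by
    have := Submodule.finrank_le (U ⊔ H)
    simpa using this
  have hsup : finrank (ZMod 2) ↥(U ⊔ H) = 8 := le_antisymm h2 h1
  have := Submodule.finrank_sup_add_finrank_inf_eq U H
  omega

lemma card_out (U H : Submodule (ZMod 2) (Fin 8 → ZMod 2))
    (hU : finrank (ZMod 2) U = 4) (hH : finrank (ZMod 2) H = 7)
    (hn : ¬ U ≤ H) :
    (univ.filter (fun v => v ∈ U ∧ v ∉ H)).card = 8 := by
  have hsub : univ.filter (· ∈ U ⊓ H) ⊆ univ.filter (· ∈ U) := by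
    intro v hv; simp only [mem_filter, Submodule.mem_inf] at *; tauto
  have heq : univ.filter (fun v => v ∈ U ∧ v ∉ H)
      = univ.filter (· ∈ U) \ univ.filter (· ∈ U ⊓ H) := by
    ext v; simp [Submodule.mem_inf]; tauto
  rw [heq, card_sdiff_of_subset hsub, card_sub, card_sub, inf_rank U H hU hH hn, hU]; rfl

lemma deg_eq (C : Finset (Submodule (ZMod 2) (Fin 8 → ZMod 2))) (v : Fin 8 → ZMod 2) :
    ({U | U ∈ C ∧ Submodule.span (ZMod 2) {v} ≤ U} :
      Set (Submodule (ZMod 2) (Fin 8 → ZMod 2))).ncard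
    = (C.filter (fun U => v ∈ U)).card := by
  rw [← Set.ncard_coe_finset]
  congr 1
  ext U
  simp [Submodule.span_singleton_le_iff_mem]

end Deg15Aux

open Deg15Aux


/-- For an `(8, N, 6; 4)_2`-like code `C` with `N ≥ 255` in which every point lies in at
most `16` codewords: for every hyperplane `H` there is a point `P'` not in `H` lying in at
least `15` codewords. -/
theorem exists_point_outside_hyperplane_deg15
    (C : Finset (Submodule (ZMod 2) (Fin 8 → ZMod 2)))
    (hdim : ∀ U ∈ C, finrank (ZMod 2) U = 4)
    (hdist : ∀ U ∈ C, ∀ W ∈ C, U ≠ W → finrank (ZMod 2) ↥(U ⊓ W) ≤ 1)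
    (hcard : 255 ≤ C.card)
    (hpt : ∀ P : Submodule (ZMod 2) (Fin 8 → ZMod 2), finrank (ZMod 2) P = 1 →
      ({U | U ∈ C ∧ P ≤ U} : Set (Submodule (ZMod 2) (Fin 8 → ZMod 2))).ncard ≤ 16)
    (H : Submodule (ZMod 2) (Fin 8 → ZMod 2)) (hH : finrank (ZMod 2) H = 7) :
    ∃ P' : Submodule (ZMod 2) (Fin 8 → ZMod 2), finrank (ZMod 2) P' = 1 ∧ ¬ P' ≤ H ∧
      15 ≤ ({U | U ∈ C ∧ P' ≤ U} : Set (Submodule (ZMod 2) (Fin 8 → ZMod 2))).ncard := by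

  classical
  set d : (Fin 8 → ZMod 2) → ℕ := fun v => (C.filter (fun U => v ∈ U)).card with hd
  set CH := C.filter (fun U => U ≤ H) with hCH
  set m := CH.card with hm
  -- Part 1 : m ≤ 18
  set Sin := univ.filter (fun v : Fin 8 → ZMod 2 => v ∈ H ∧ v ≠ 0) with hSin
  have hSinCard : Sin.card = 127 := by rw [hSin, card_sub_ne, hH]; rfl
  set dH : (Fin 8 → ZMod 2) → ℕ := fun v => (CH.filter (fun U => v ∈ U)).card with hdH
  have hUin : ∀ U ∈ CH, (Sin.filter (fun v => v ∈ U)).card = 15 := by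
    intro U hU
    rw [hCH, mem_filter] at hU
    have heq : Sin.filter (fun v => v ∈ U) = univ.filter (fun v => v ∈ U ∧ v ≠ 0) := by
      rw [hSin, filter_filter]
      ext v
      simp only [mem_filter, mem_univ, true_and]
      constructor
      · rintro ⟨⟨_, h0⟩, hu⟩; exact ⟨hu, h0⟩
      · rintro ⟨hu, h0⟩; exact ⟨⟨hU.2 hu, h0⟩, hu⟩
    rw [heq, card_sub_ne, hdim U hU.1]; rfl
  have hsum1 : ∑ v ∈ Sin, dH v = 15 * m := by
    calc ∑ v ∈ Sin, dH v = ∑ v ∈ Sin, ∑ U ∈ CH, if v ∈ U then 1 else 0 := by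
          simp_rw [hdH, card_filter]
      _ = ∑ U ∈ CH, ∑ v ∈ Sin, if v ∈ U then 1 else 0 := Finset.sum_comm
      _ = ∑ U ∈ CH, (Sin.filter (fun v => v ∈ U)).card := by
          simp_rw [card_filter]
      _ = ∑ U ∈ CH, 15 := sum_congr rfl hUin
      _ = 15 * m := by rw [sum_const, hm, smul_eq_mul, mul_comm]
  have hpair : ∀ U ∈ CH, ∀ W ∈ CH, U ≠ W →
      (Sin.filter (fun v => v ∈ U ∧ v ∈ W)).card ≤ 1 := by
    intro U hU W hW hne
    rw [hCH, mem_filter] at hU hW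
    have hr := hdist U hU.1 W hW.1 hne
    have hsub : Sin.filter (fun v => v ∈ U ∧ v ∈ W)
        ⊆ univ.filter (fun v => v ∈ U ⊓ W ∧ v ≠ 0) := by
      intro v hv
      rw [hSin, filter_filter] at hv
      simp only [mem_filter, mem_univ, true_and, Submodule.mem_inf] at *
      tauto
    calc (Sin.filter (fun v => v ∈ U ∧ v ∈ W)).card
        ≤ (univ.filter (fun v => v ∈ U ⊓ W ∧ v ≠ 0)).card := card_le_card hsub
      _ = 2 ^ finrank (ZMod 2) ↥(U ⊓ W) - 1 := card_sub_ne _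
      _ ≤ 1 := by
          have := Nat.pow_le_pow_right (by norm_num : 1 ≤ 2) hr
          omega
  have hsum2 : ∑ v ∈ Sin, (dH v) ^ 2 ≤ m * (m + 14) := by
    have hdiag : ∀ U ∈ CH,
        ∑ W ∈ CH, (Sin.filter (fun v => v ∈ U ∧ v ∈ W)).card ≤ m + 14 := by
      intro U hU
      rw [← Finset.sum_erase_add _ _ hU]
      have h1 : ∑ W ∈ CH.erase U, (Sin.filter (fun v => v ∈ U ∧ v ∈ W)).card ≤ m - 1 := by
        calc ∑ W ∈ CH.erase U, (Sin.filter (fun v => v ∈ U ∧ v ∈ W)).card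
            ≤ ∑ _W ∈ CH.erase U, 1 := sum_le_sum fun W hW =>
              hpair U hU W (mem_of_mem_erase hW) (Ne.symm (ne_of_mem_erase hW))
          _ = (CH.erase U).card := by simp
          _ = m - 1 := by rw [card_erase_of_mem hU, hm]
      have h2 : (Sin.filter (fun v => v ∈ U ∧ v ∈ U)).card = 15 := by
        have := hUin U hU
        simpa [and_self] using this
      have hm1 : 1 ≤ m := card_pos.mpr ⟨U, hU⟩
      omega
    calc ∑ v ∈ Sin, (dH v) ^ 2
        = ∑ v ∈ Sin, ∑ U ∈ CH, ∑ W ∈ CH, if v ∈ U ∧ v ∈ W then 1 else 0 := by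
          refine sum_congr rfl fun v _ => ?_
          have hv : dH v = ∑ U ∈ CH, if v ∈ U then 1 else 0 := by
            simp only [hdH]; exact card_filter _ _
          rw [sq, hv, Finset.sum_mul_sum]
          refine sum_congr rfl fun U _ => sum_congr rfl fun W _ => ?_
          by_cases h1 : v ∈ U <;> by_cases h2 : v ∈ W <;> simp [h1, h2]
      _ = ∑ U ∈ CH, ∑ W ∈ CH, ∑ v ∈ Sin, if v ∈ U ∧ v ∈ W then 1 else 0 := by
          rw [Finset.sum_comm]
          exact sum_congr rfl fun U _ => Finset.sum_comm
      _ = ∑ U ∈ CH, ∑ W ∈ CH, (Sin.filter (fun v => v ∈ U ∧ v ∈ W)).card := by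
          simp_rw [card_filter]
      _ ≤ ∑ _U ∈ CH, (m + 14) := sum_le_sum hdiag
      _ = m * (m + 14) := by rw [sum_const, hm, smul_eq_mul]
  have hcs := sq_sum_le_card_mul_sum_sq (s := Sin) (f := dH)
  have hm18 : m ≤ 18 := by
    rw [hsum1, hSinCard] at hcs
    have hkey : (15 * m) ^ 2 ≤ 127 * (m * (m + 14)) :=
      le_trans (by exact_mod_cast hcs) (Nat.mul_le_mul_left 127 hsum2)
    nlinarith [hkey]
  -- Part 2
  set Sout := univ.filter (fun v : Fin 8 → ZMod 2 => v ∉ H) with hSout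
  have hSoutCard : Sout.card = 128 := by
    have h1 : (univ.filter (· ∈ H)).card = 128 := by
      rw [card_sub, hH]; rfl
    have h2 := Finset.card_filter_add_card_filter_not
      (s := (univ : Finset (Fin 8 → ZMod 2))) (p := (· ∈ H))
    have h3 : (univ : Finset (Fin 8 → ZMod 2)).card = 256 := by
      simp [Fintype.card_fun]
    rw [hSout]; omega
  have hCsplit : (C.filter (fun U => ¬ U ≤ H)).card = C.card - m := by
    have := Finset.card_filter_add_card_filter_not
      (s := C) (p := fun U => U ≤ H)
    rw [hm, hCH]; omega
  have hsumOut : ∑ v ∈ Sout, d v = 8 * (C.card - m) := by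
    calc ∑ v ∈ Sout, d v = ∑ v ∈ Sout, ∑ U ∈ C, if v ∈ U then 1 else 0 := by
          simp_rw [hd, card_filter]
      _ = ∑ U ∈ C, ∑ v ∈ Sout, if v ∈ U then 1 else 0 := Finset.sum_comm
      _ = ∑ U ∈ C, (Sout.filter (fun v => v ∈ U)).card := by
          simp_rw [card_filter]
      _ = ∑ U ∈ C, (if U ≤ H then 0 else 8) := by
          refine sum_congr rfl fun U hU => ?_
          have heq : Sout.filter (fun v => v ∈ U)
              = univ.filter (fun v => v ∈ U ∧ v ∉ H) := by
            rw [hSout, filter_filter]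
            ext v
            simp only [mem_filter, mem_univ, true_and]
            tauto
          rw [heq]
          by_cases hUH : U ≤ H
          · rw [if_pos hUH, Finset.card_eq_zero, Finset.filter_eq_empty_iff]
            intro v _
            push_neg
            intro hu
            exact hUH hu
          · rw [if_neg hUH]
            exact card_out U H (hdim U hU) hH hUH
      _ = ∑ U ∈ C, (if ¬ U ≤ H then 8 else 0) := by
          refine sum_congr rfl fun U _ => ?_
          by_cases h : U ≤ H <;> simp [h]
      _ = ∑ _U ∈ C.filter (fun U => ¬ U ≤ H), 8 := (Finset.sum_filter _ _).symm
      _ = 8 * (C.card - m) := by rw [sum_const, hCsplit, smul_eq_mul, mul_comm]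
  have hex : ∃ v ∈ Sout, 15 ≤ d v := by
    by_contra hno
    push_neg at hno
    have hle : ∑ v ∈ Sout, d v ≤ ∑ _v ∈ Sout, 14 :=
      sum_le_sum fun v hv => by have := hno v hv; omega
    rw [sum_const, hSoutCard, smul_eq_mul] at hle
    rw [hsumOut] at hle
    omega
  obtain ⟨v, hvS, hv15⟩ := hex
  have hvH : v ∉ H := by
    rw [hSout, mem_filter] at hvS
    exact hvS.2
  have hv0 : v ≠ 0 := fun h => hvH (h ▸ H.zero_mem)
  refine ⟨Submodule.span (ZMod 2) {v}, finrank_span_singleton hv0, ?_, ?_⟩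
  · rw [Submodule.span_singleton_le_iff_mem]; exact hvH
  · rw [deg_eq]; exact hv15
end

section
/- Let C be a set of k-dimensional subspaces of F_q^{2k} with minimum subspace distance d_s(C) ≥ d. If every hyperplane of F_q^{2k} contains at most m codewords of C, then |C| ≤ m · [2k choose 1]_q / [k choose 1]_q, where [n choose 1]_q = (q^n − 1)/(q − 1). In particular, for q = 2, k = 4: if every hyperplane contains at most 15 codewords then |C| ≤ 255. -/
open Module Finset

section Aux
variable {F V : Type*} [Field F] [Fintype F] [AddCommGroup V] [Module F V]
  [Fintype V] [FiniteDimensional F V]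

omit [FiniteDimensional F V] in
lemma card_nonzero' (W : Submodule F V) [DecidableEq V] [DecidablePred (· ∈ W)] :
    (univ.filter fun x : V => x ∈ W ∧ x ≠ 0).card = Fintype.card F ^ finrank F W - 1 := by
  have h1 : (univ.filter fun x : V => x ∈ W ∧ x ≠ 0)
      = (univ.filter fun x : V => x ∈ W).erase 0 := by
    ext x; simp [Finset.mem_erase, and_comm]
  have h2 : (univ.filter fun x : V => x ∈ W).card = Fintype.card W := by
    simp [Fintype.card_subtype]
  rw [h1, Finset.card_erase_of_mem (by simp [W.zero_mem]), h2,
    card_eq_pow_finrank (K := F) (V := W)]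

lemma count_hyperplanes' (U : Submodule F V) :
    Nat.card {H : Submodule F V // U ≤ H ∧ finrank F H + 1 = finrank F V}
      * (Fintype.card F - 1)
      = Fintype.card F ^ (finrank F V - finrank F U) - 1 := by
  classical
  haveI : Finite (Dual F V) :=
    Finite.of_injective (fun f => (f : V → F)) DFunLike.coe_injective
  haveI : Fintype (Dual F V) := Fintype.ofFinite _
  haveI : Finite (Submodule F V) :=
    Finite.of_injective (fun W => (W : Set V)) fun _ _ h => SetLike.coe_injective h
  haveI : Fintype (Submodule F V) := Fintype.ofFinite _
  rw [Nat.card_eq_fintype_card, Fintype.card_subtype]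
  set n := finrank F V
  set T := univ.filter fun H : Submodule F V => U ≤ H ∧ finrank F H + 1 = n with hT
  set D := univ.filter fun f : Dual F V => f ∈ U.dualAnnihilator ∧ f ≠ 0 with hD
  have hmap : ∀ f ∈ D, LinearMap.ker f ∈ T := by
    intro f hf
    simp only [hD, mem_filter, mem_univ, true_and] at hf
    simp only [hT, mem_filter, mem_univ, true_and]
    exact ⟨fun x hx => (Submodule.mem_dualAnnihilator f).mp hf.1 x hx,
      Module.Dual.finrank_ker_add_one_of_ne_zero hf.2⟩
  have key := Finset.card_eq_sum_card_fiberwise hmap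
  have hfib : ∀ H ∈ T, (D.filter fun f => LinearMap.ker f = H).card
      = Fintype.card F - 1 := by
    intro H hH
    simp only [hT, mem_filter, mem_univ, true_and] at hH
    have hsetseq : (D.filter fun f => LinearMap.ker f = H)
        = univ.filter fun f : Dual F V => f ∈ H.dualAnnihilator ∧ f ≠ 0 := by
      ext f
      simp only [hD, Finset.filter_filter, mem_filter, mem_univ, true_and, and_assoc]
      constructor
      · rintro ⟨-, hf0, rfl⟩
        exact ⟨(Submodule.mem_dualAnnihilator f).mpr fun w hw => hw, hf0⟩
      · rintro ⟨hfH, hf0⟩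
        have hle : H ≤ LinearMap.ker f := fun x hx => by
          simpa using (Submodule.mem_dualAnnihilator f).mp hfH x hx
        have heq : H = LinearMap.ker f := Submodule.eq_of_le_of_finrank_le hle (by
          have := Module.Dual.finrank_ker_add_one_of_ne_zero hf0
          omega)
        refine ⟨(Submodule.mem_dualAnnihilator f).mpr fun w hw =>
          (Submodule.mem_dualAnnihilator f).mp hfH w (hH.1 hw), hf0, heq.symm⟩
    rw [hsetseq, card_nonzero']
    congr 1
    have h1 : finrank F H.dualAnnihilator = finrank F (V ⧸ H) :=
      (Subspace.quotEquivAnnihilator H).symm.finrank_eq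
    have h2 := Submodule.finrank_quotient_add_finrank H
    have : finrank F H.dualAnnihilator = 1 := by omega
    rw [this, pow_one]
  have hDcard : D.card = Fintype.card F ^ (n - finrank F U) - 1 := by
    rw [hD, card_nonzero']
    congr 2
    have h1 : finrank F U.dualAnnihilator = finrank F (V ⧸ U) :=
      (Subspace.quotEquivAnnihilator U).symm.finrank_eq
    have h2 := Submodule.finrank_quotient_add_finrank U
    omega
  rw [← hDcard, key, Finset.sum_congr rfl hfib, Finset.sum_const, smul_eq_mul]

end Aux

/-- Double-counting bound: if `C` is a set of `k`-dimensional subspaces of `F_q^{2k}` with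
minimum subspace distance at least `d`, and every hyperplane contains at most `m` codewords,
then `|C| ≤ m · [2k choose 1]_q / [k choose 1]_q = m · (q^{2k} − 1)/(q^k − 1)`.
(For `q = 2, k = 4, m = 15` this gives `|C| ≤ 255`.) -/
theorem card_le_of_hyperplane_bound (F : Type*) [Field F] [Fintype F] (q k d m : ℕ)
    (hq : Fintype.card F = q) (hk : 1 ≤ k)
    (C : Finset (Submodule F (Fin (2 * k) → F)))
    (hdim : ∀ U ∈ C, finrank F U = k)
    (hdist : ∀ U ∈ C, ∀ W ∈ C, U ≠ W → d + 2 * finrank F ↥(U ⊓ W) ≤ 2 * k)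
    (hH : ∀ H : Submodule F (Fin (2 * k) → F), finrank F H = 2 * k - 1 →
      ({U | U ∈ C ∧ U ≤ H} : Set (Submodule F (Fin (2 * k) → F))).ncard ≤ m) :
    C.card ≤ m * ((q ^ (2 * k) - 1) / (q ^ k - 1)) := by
  classical
  set V := Fin (2 * k) → F with hV
  haveI : Finite (Submodule F V) :=
    Finite.of_injective (fun W => (W : Set V)) fun _ _ h => SetLike.coe_injective h
  haveI : Fintype (Submodule F V) := Fintype.ofFinite _
  have hq2 : 2 ≤ q := hq ▸ Fintype.one_lt_card
  have hqk : 2 ≤ q ^ k := le_trans hq2 (Nat.le_self_pow (by omega) q)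
  have hnV : finrank F V = 2 * k := by
    show finrank F (Fin (2 * k) → F) = 2 * k
    simp
  set Hs : Finset (Submodule F V) := univ.filter fun H => finrank F H = 2 * k - 1 with hHs
  -- upper bound per hyperplane
  have hub : ∀ H ∈ Hs, (C.filter fun U => U ≤ H).card ≤ m := by
    intro H hHmem
    simp only [hHs, mem_filter, mem_univ, true_and] at hHmem
    have := hH H hHmem
    have hset : ({U | U ∈ C ∧ U ≤ H} : Set (Submodule F V))
        = ↑(C.filter fun U => U ≤ H) := by ext U; simp
    rwa [hset, Set.ncard_coe_finset] at this
  -- count of hyperplanes through a fixed U ∈ C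
  have hcount : ∀ U ∈ C, (Hs.filter fun H => U ≤ H).card * (q - 1) = q ^ k - 1 := by
    intro U hU
    have hsub : (Hs.filter fun H => U ≤ H)
        = univ.filter fun H : Submodule F V => U ≤ H ∧ finrank F H + 1 = finrank F V := by
      ext H
      simp only [hHs, Finset.filter_filter, mem_filter, mem_univ, true_and, hnV]
      constructor
      · rintro ⟨h1, h2⟩; exact ⟨h2, by omega⟩
      · rintro ⟨h1, h2⟩; exact ⟨by omega, h1⟩
    have := count_hyperplanes' U
    rw [Nat.card_eq_fintype_card, Fintype.card_subtype] at this
    rw [hsub, ← hq]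
    rw [this, hnV, hdim U hU, hq]
    congr 2
    omega
  -- total number of hyperplanes
  have htot : Hs.card * (q - 1) = q ^ (2 * k) - 1 := by
    have hsub : Hs = univ.filter fun H : Submodule F V =>
        (⊥ : Submodule F V) ≤ H ∧ finrank F H + 1 = finrank F V := by
      ext H
      simp only [hHs, mem_filter, mem_univ, true_and, hnV, bot_le, true_and]
      omega
    have := count_hyperplanes' (⊥ : Submodule F V)
    rw [Nat.card_eq_fintype_card, Fintype.card_subtype] at this
    rw [hsub, ← hq, this, hnV]
    simp
  -- double counting
  have hswap : ∑ H ∈ Hs, (C.filter fun U => U ≤ H).card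
      = ∑ U ∈ C, (Hs.filter fun H => U ≤ H).card := by
    simp only [Finset.card_filter]
    exact Finset.sum_comm
  have hmain : ∑ U ∈ C, (Hs.filter fun H => U ≤ H).card ≤ Hs.card * m := by
    rw [← hswap]
    calc ∑ H ∈ Hs, (C.filter fun U => U ≤ H).card ≤ ∑ H ∈ Hs, m :=
          Finset.sum_le_sum hub
      _ = Hs.card * m := by rw [Finset.sum_const, smul_eq_mul]
  -- multiply by (q-1)
  have hineq : C.card * (q ^ k - 1) ≤ m * (q ^ (2 * k) - 1) := by
    have h1 : (∑ U ∈ C, (Hs.filter fun H => U ≤ H).card) * (q - 1)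
        = C.card * (q ^ k - 1) := by
      rw [Finset.sum_mul]
      rw [Finset.sum_congr rfl hcount, Finset.sum_const, smul_eq_mul]
    calc C.card * (q ^ k - 1)
        = (∑ U ∈ C, (Hs.filter fun H => U ≤ H).card) * (q - 1) := h1.symm
      _ ≤ Hs.card * m * (q - 1) := Nat.mul_le_mul_right _ hmain
      _ = m * (Hs.card * (q - 1)) := by ring
      _ = m * (q ^ (2 * k) - 1) := by rw [htot]
  -- arithmetic: q^{2k} - 1 = (q^k - 1)(q^k + 1)
  have hfact : q ^ (2 * k) - 1 = (q ^ k - 1) * (q ^ k + 1) := by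
    have h2 : q ^ (2 * k) = q ^ k * q ^ k := by rw [two_mul, pow_add]
    obtain ⟨z, hz⟩ : ∃ z, q ^ k = z + 1 := ⟨q ^ k - 1, by omega⟩
    rw [h2, hz]
    simp only [Nat.add_sub_cancel]
    have : z * (z + 1 + 1) + 1 = (z + 1) * (z + 1) := by ring
    omega
  have hdiv : (q ^ (2 * k) - 1) / (q ^ k - 1) = q ^ k + 1 := by
    rw [hfact, Nat.mul_div_cancel_left _ (by omega)]
  rw [hdiv]
  have h3 : m * (q ^ (2 * k) - 1) = m * (q ^ k + 1) * (q ^ k - 1) := by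
    rw [hfact]; ring
  exact Nat.le_of_mul_le_mul_right (hineq.trans_eq h3) (by omega : 0 < q ^ k - 1)
end

section
/- For m×n matrices A, B over F_q, the subspace distance between the lifted subspaces satisfies d_s(Λ(A), Λ(B)) = 2·rank(A − B). That is, the lifting map is an isometry from (F_q^{m×n}, 2·d_r) into the subspace metric space, where d_r is the rank distance. -/
open Module Matrix

/-! `Λ(A) ∩ Λ(B)` is the image under `x ↦ x (I | A)` of the left kernel of `A - B`, and
`x ↦ x (I | A)` is injective, so `dim (Λ(A) ∩ Λ(B)) = m - rank (A - B)` while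
`dim Λ(A) = dim Λ(B) = m`. -/

/-- The lifting map: `Λ(A)` is the row space of `(I_m | A)` inside `F^{m+n}`
(coordinates indexed by `Fin m ⊕ Fin n`). -/
noncomputable def liftMRD (F : Type*) [Field F] (m n : ℕ)
    (A : Matrix (Fin m) (Fin n) F) : Submodule F ((Fin m ⊕ Fin n) → F) :=
  LinearMap.range (Matrix.vecMulLinear (Matrix.fromCols (1 : Matrix (Fin m) (Fin m) F) A))

namespace Matrix

variable {R m n : Type*} [Fintype m]

theorem vecMul_fromCols_one_eq_vecMul_fromCols_one_iff [Semiring R] [DecidableEq m]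
    (A B : Matrix m n R) (x y : m → R) :
    x ᵥ* fromCols (1 : Matrix m m R) A = y ᵥ* fromCols (1 : Matrix m m R) B ↔
      x = y ∧ x ᵥ* A = y ᵥ* B := by
  simp only [vecMul_fromCols, vecMul_one, Sum.elim_eq_iff]

theorem vecMulLinear_fromCols_one_injective [CommSemiring R] [DecidableEq m]
    (A : Matrix m n R) : Function.Injective (fromCols (1 : Matrix m m R) A).vecMulLinear :=
  fun x y h => ((vecMul_fromCols_one_eq_vecMul_fromCols_one_iff A A x y).1 h).1

theorem range_vecMulLinear_fromCols_one_inf [CommRing R] [DecidableEq m]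
    (A B : Matrix m n R) :
    LinearMap.range (fromCols (1 : Matrix m m R) A).vecMulLinear ⊓
        LinearMap.range (fromCols (1 : Matrix m m R) B).vecMulLinear =
      (LinearMap.ker (A - B).vecMulLinear).map (fromCols (1 : Matrix m m R) A).vecMulLinear := by
  ext v
  simp only [Submodule.mem_inf, LinearMap.mem_range, Submodule.mem_map, LinearMap.mem_ker,
    vecMulLinear_apply, vecMul_sub, sub_eq_zero]
  constructor
  · rintro ⟨⟨x, rfl⟩, ⟨y, hy⟩⟩
    obtain ⟨rfl, hxy⟩ := (vecMul_fromCols_one_eq_vecMul_fromCols_one_iff A B x y).1 hy.symm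
    exact ⟨x, hxy, rfl⟩
  · rintro ⟨x, hx, rfl⟩
    exact ⟨⟨x, rfl⟩,
      ⟨x, (vecMul_fromCols_one_eq_vecMul_fromCols_one_iff B A x x).2 ⟨rfl, hx.symm⟩⟩⟩

theorem finrank_range_vecMulLinear [Fintype n] [Field R] (C : Matrix m n R) :
    finrank R (LinearMap.range C.vecMulLinear) = C.rank := by
  rw [← mulVecLin_transpose, ← rank_transpose]
  rfl

theorem finrank_ker_vecMulLinear_add_rank [Fintype n] [Field R] (C : Matrix m n R) :
    finrank R (LinearMap.ker C.vecMulLinear) + C.rank = Fintype.card m := by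
  rw [← finrank_range_vecMulLinear C, add_comm, LinearMap.finrank_range_add_finrank_ker,
    finrank_fintype_fun_eq_card]

end Matrix

section

variable {F : Type*} [Field F] {m n : ℕ}

theorem finrank_liftMRD (A : Matrix (Fin m) (Fin n) F) : finrank F (liftMRD F m n A) = m := by
  rw [liftMRD, LinearMap.finrank_range_of_inj (vecMulLinear_fromCols_one_injective A),
    finrank_fin_fun]

theorem finrank_liftMRD_inf_add_rank (A B : Matrix (Fin m) (Fin n) F) :
    finrank F ↥(liftMRD F m n A ⊓ liftMRD F m n B) + (A - B).rank = m := by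
  rw [liftMRD, liftMRD, range_vecMulLinear_fromCols_one_inf,
    ← (Submodule.equivMapOfInjective _ (vecMulLinear_fromCols_one_injective A) _).finrank_eq]
  simpa only [Fintype.card_fin] using finrank_ker_vecMulLinear_add_rank (A - B)

end

/-- The lifting map is an isometry from `(F_q^{m×n}, 2·d_r)` into the subspace metric space:
`d_s(Λ(A), Λ(B)) = 2 · rank(A − B)`. -/
theorem liftMRD_isometry (F : Type*) [Field F] (m n : ℕ)
    (A B : Matrix (Fin m) (Fin n) F) :
    (finrank F ↥(liftMRD F m n A) : ℤ) + (finrank F ↥(liftMRD F m n B) : ℤ)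
        - 2 * (finrank F ↥(liftMRD F m n A ⊓ liftMRD F m n B) : ℤ)
      = 2 * ((A - B).rank : ℤ) := by
  have hA := finrank_liftMRD A
  have hB := finrank_liftMRD B
  have hAB := finrank_liftMRD_inf_add_rank A B
  omega
end

section
/- If C ⊆ F_q^{m×n} (m ≤ n) is a rank-metric code with minimum rank distance d (i.e., rank(A−B) ≥ d for all distinct A, B ∈ C), then |C| ≤ q^{(m−d+1)n} (Singleton-type bound for rank-metric codes). -/
/-!
Fix any `m - d + 1` rows. Two distinct codewords cannot agree on those rows: their difference
would then be supported on the remaining `d - 1` rows and so have rank below `d`. Hence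
restricting codewords to these rows is injective, and there are only `q ^ ((m - d + 1) * n)`
possible restrictions.
-/

open Finset

namespace Matrix

variable {F ι κ : Type*} [Field F] [Fintype ι] [Fintype κ]

theorem rank_le_card_of_forall_notMem_row_eq_zero (M : Matrix ι κ F) (s : Finset ι)
    (h : ∀ i ∉ s, M i = 0) : M.rank ≤ #s := by
  have hspan : Submodule.span F (Set.range M.row) ≤
      Submodule.span F (Set.range fun i : s ↦ M.row i) := by
    refine Submodule.span_le.mpr ?_
    rintro _ ⟨i, rfl⟩
    by_cases hi : i ∈ s
    · exact Submodule.subset_span ⟨⟨i, hi⟩, rfl⟩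
    · simp [row, h i hi]
  calc M.rank = Module.finrank F (Submodule.span F (Set.range M.row)) :=
        M.rank_eq_finrank_span_row
    _ ≤ Module.finrank F (Submodule.span F (Set.range fun i : s ↦ M.row i)) :=
        Submodule.finrank_mono hspan
    _ ≤ Fintype.card s := finrank_range_le_card _
    _ = #s := Fintype.card_coe s

end Matrix

section RankMetric

variable {F ι κ : Type*} [Field F] [Fintype ι] [Fintype κ] [DecidableEq ι] {d : ℕ}
  {C : Finset (Matrix ι κ F)}

theorem injOn_submatrix_of_card_compl_lt (s : Finset ι) (hs : #sᶜ < d)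
    (hdist : ∀ A ∈ C, ∀ B ∈ C, A ≠ B → d ≤ (A - B).rank) :
    Set.InjOn (fun A : Matrix ι κ F ↦ A.submatrix ((↑) : s → ι) id) C := by
  intro A hA B hB hAB
  by_contra hne
  have hrows : ∀ i ∉ sᶜ, (A - B) i = 0 := fun i hi ↦ by
    ext j
    simpa [sub_eq_zero] using congrFun (congrFun hAB ⟨i, by simpa using hi⟩) j
  have hrank_le := (A - B).rank_le_card_of_forall_notMem_row_eq_zero sᶜ hrows
  have hrank_ge := hdist A hA B hB hne
  omega

theorem card_le_pow_of_card_compl_lt [Fintype F] (s : Finset ι) (hs : #sᶜ < d)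
    (hdist : ∀ A ∈ C, ∀ B ∈ C, A ≠ B → d ≤ (A - B).rank) :
    #C ≤ Fintype.card F ^ (#s * Fintype.card κ) := by
  classical
  calc #C ≤ Fintype.card (s → κ → F) :=
        Finset.card_le_card_of_injOn _ (fun _ _ ↦ Finset.mem_univ _)
          (injOn_submatrix_of_card_compl_lt s hs hdist)
    _ = Fintype.card F ^ (#s * Fintype.card κ) := by
        rw [Fintype.card_fun, Fintype.card_fun, Fintype.card_coe, ← pow_mul, mul_comm]

end RankMetric

theorem rank_metric_singleton_bound_general (F : Type*) [Field F] [Fintype F] (q m n d : ℕ)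
    (hq : Fintype.card F = q) (hd : 1 ≤ d) (hdm : d ≤ m)
    (C : Finset (Matrix (Fin m) (Fin n) F))
    (hdist : ∀ A ∈ C, ∀ B ∈ C, A ≠ B → d ≤ (A - B).rank) :
    C.card ≤ q ^ ((m - d + 1) * n) := by
  obtain ⟨s, -, hs⟩ := Finset.exists_subset_card_eq (s := (univ : Finset (Fin m)))
    (n := m - d + 1) (by simp only [card_univ, Fintype.card_fin]; omega)
  have hcompl : #sᶜ < d := by
    rw [card_compl, hs, Fintype.card_fin]
    omega
  simpa [hs, hq] using card_le_pow_of_card_compl_lt s hcompl hdist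

/-- Singleton-type bound for rank-metric codes: if `C ⊆ F_q^{m×n}` (`m ≤ n`) has minimum
rank distance at least `d`, then `|C| ≤ q^{(m−d+1)n}`. -/
theorem rank_metric_singleton_bound (F : Type*) [Field F] [Fintype F] (q m n d : ℕ)
    (hq : Fintype.card F = q) (hmn : m ≤ n) (hd : 1 ≤ d) (hdm : d ≤ m)
    (C : Finset (Matrix (Fin m) (Fin n) F))
    (hdist : ∀ A ∈ C, ∀ B ∈ C, A ≠ B → d ≤ (A - B).rank) :
    C.card ≤ q ^ ((m - d + 1) * n) :=
  rank_metric_singleton_bound_general F q m n d hq hd hdm C hdist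
end
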